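/- On the blow-up X = Bl_p(ℙ²) with H the pullback of the hyperplane class and E the exceptional divisor, define Vol(xH − yE) = x² − y² for x > y ≥ 0 and Vol(xH − yE) = x² for x ≥ 0, y ≤ 0. Fix the polarisation L = 3H − yE with 0 < y < 3. Then the quantity β(E) := (9 − y²) + ((18 − 2y)/(9 − y²))·∫₀^{3−y} (9 − y² − 2yz − z²) dz + ∫₀^{3−y} (−18 + 2y + 2z) dz equals −4(y − 3)²·y / (3(y + 3)), and in particular β(E) < 0 for all 0 < y < 3. -/
import Mathlib


open intervalIntegral

lemma int1 (y : ℝ) : (∫ z in (0:ℝ)..(3 - y), (9 - y ^ 2 - 2 * y * z - z ^ 2))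
    = (9 - y^2) * (3-y) - y * (3-y)^2 - (3-y)^3/3 := by
  have h1 : (∫ z in (0:ℝ)..(3 - y), (9 - y ^ 2 - 2 * y * z - z ^ 2))
      = (∫ z in (0:ℝ)..(3 - y), (9 - y ^ 2)) - (∫ z in (0:ℝ)..(3 - y), 2 * y * z)
        - (∫ z in (0:ℝ)..(3 - y), z ^ 2) := by
    rw [← intervalIntegral.integral_sub, ← intervalIntegral.integral_sub] <;>
      apply Continuous.intervalIntegrable <;> fun_prop
  rw [h1, intervalIntegral.integral_const, intervalIntegral.integral_const_mul,
    integral_id, integral_pow, smul_eq_mul]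
  ring

lemma int2 (y : ℝ) : (∫ z in (0:ℝ)..(3 - y), (-18 + 2 * y + 2 * z))
    = (-18 + 2*y) * (3-y) + (3-y)^2 := by
  have h1 : (∫ z in (0:ℝ)..(3 - y), (-18 + 2 * y + 2 * z))
      = (∫ z in (0:ℝ)..(3 - y), (-18 + 2 * y)) + (∫ z in (0:ℝ)..(3 - y), 2 * z) := by
    rw [← intervalIntegral.integral_add] <;>
      apply Continuous.intervalIntegrable <;> fun_prop
  rw [h1, intervalIntegral.integral_const, intervalIntegral.integral_const_mul, integral_id, smul_eq_mul]
  ring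

/-- Section 4.2: the β-invariant of the exceptional divisor on `Bl_p ℙ²` with
polarisation `L = 3H − yE`, `0 < y < 3`, equals `−4(y−3)²y/(3(y+3))` and is negative. -/
theorem stmt_4 (y : ℝ) (hy0 : 0 < y) (hy3 : y < 3) :
    (9 - y ^ 2) + ((18 - 2 * y) / (9 - y ^ 2)) *
        (∫ z in (0:ℝ)..(3 - y), (9 - y ^ 2 - 2 * y * z - z ^ 2)) +
      (∫ z in (0:ℝ)..(3 - y), (-18 + 2 * y + 2 * z)) =
      -4 * (y - 3) ^ 2 * y / (3 * (y + 3)) ∧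
    (9 - y ^ 2) + ((18 - 2 * y) / (9 - y ^ 2)) *
        (∫ z in (0:ℝ)..(3 - y), (9 - y ^ 2 - 2 * y * z - z ^ 2)) +
      (∫ z in (0:ℝ)..(3 - y), (-18 + 2 * y + 2 * z)) < 0 := by
  have hne : (9 : ℝ) - y ^ 2 ≠ 0 := by nlinarith
  have heq : (9 - y ^ 2) + ((18 - 2 * y) / (9 - y ^ 2)) *
        (∫ z in (0:ℝ)..(3 - y), (9 - y ^ 2 - 2 * y * z - z ^ 2)) +
      (∫ z in (0:ℝ)..(3 - y), (-18 + 2 * y + 2 * z)) =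
      -4 * (y - 3) ^ 2 * y / (3 * (y + 3)) := by
    rw [int1, int2]
    field_simp
    ring
  refine ⟨heq, ?_⟩
  rw [heq]
  have h3 : (0:ℝ) < (y - 3) ^ 2 := by
    have : y - 3 ≠ 0 := by linarith
    positivity
  apply div_neg_of_neg_of_pos
  · nlinarith
  · nlinarith
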